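/- Upper Berezin–Lieb inequality: for a self-adjoint operator H on C^{2S+1} with an upper symbol [H]_Ω (i.e., H = (2S+1)/(4π) ∫_{S²} [H]_Ω |Ω⟩⟨Ω| dΩ with [H]_Ω real), one has Tr(e^{-βH})/(2S+1) ≤ (1/(4π)) ∫_{S²} e^{-β[H]_Ω} dΩ for all β ≥ 0. -/

import Mathlib

/-! Let `ψᵢ` be an orthonormal eigenbasis of `H`, `H ψᵢ = λᵢ ψᵢ`. The resolution of the identity
makes `ρᵢ(Ω) = (2S+1)/(4π) |⟨ψᵢ|Ω⟩|²` a probability density on the sphere, and the upper symbol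
representation says that the mean of `[H]_Ω` under `ρᵢ` is `λᵢ`. Jensen's inequality for `exp`
gives `e^{-βλᵢ} ≤ ∫ e^{-β[H]_Ω} ρᵢ(Ω) dΩ`, and summing over `i` yields the claim, since
`∑ᵢ |⟨ψᵢ|Ω⟩|² = ‖Ω‖² = 1`. -/

/-- The spin-`S` Bloch coherent state for `2S = n`, expressed in the basis `|M⟩`
indexed by `k = S + M ∈ {0, …, n}`:
`|Ω⟩_k = binom(2S, S+M)^{1/2} (cos(θ/2))^{S+M} (sin(θ/2))^{S-M} e^{i(S-M)φ}`. -/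
noncomputable def coherentState (n : ℕ) (θ φ : ℝ) : Fin (n + 1) → ℂ := fun k =>
  (Real.sqrt (n.choose k) : ℂ) * (Real.cos (θ / 2) : ℂ) ^ (k : ℕ)
    * (Real.sin (θ / 2) : ℂ) ^ (n - (k : ℕ))
    * Complex.exp (Complex.I * ((n - (k : ℕ) : ℕ) : ℂ) * (φ : ℂ))

open MeasureTheory Set Matrix

theorem intervalIntegral_intervalIntegral_eq_setIntegral_prod {E : Type*} [NormedAddCommGroup E]
    [NormedSpace ℝ E] {a b c d : ℝ} (hab : a ≤ b) (hcd : c ≤ d) {f : ℝ → ℝ → E}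
    (hf : Continuous fun p : ℝ × ℝ => f p.1 p.2) :
    ∫ x in a..b, ∫ y in c..d, f x y = ∫ p in Icc a b ×ˢ Icc c d, f p.1 p.2 := by
  rw [Measure.volume_eq_prod, setIntegral_prod (fun p : ℝ × ℝ => f p.1 p.2)
    (hf.continuousOn.integrableOn_compact (isCompact_Icc.prod isCompact_Icc)),
    intervalIntegral.integral_of_le hab, ← integral_Icc_eq_integral_Ioc]
  refine setIntegral_congr_fun measurableSet_Icc fun x _ => ?_
  rw [intervalIntegral.integral_of_le hcd, ← integral_Icc_eq_integral_Ioc]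

theorem exp_integral_le_integral_mul_exp {X : Type*} [MeasurableSpace X] {μ : Measure X}
    {ρ g : X → ℝ} (hρ : 0 ≤ᵐ[μ] ρ) (hρi : Integrable ρ μ)
    (hρg : Integrable (fun x => ρ x * g x) μ) (hρe : Integrable (fun x => ρ x * Real.exp (g x)) μ)
    (hmass : ∫ x, ρ x ∂μ = 1) :
    Real.exp (∫ x, ρ x * g x ∂μ) ≤ ∫ x, ρ x * Real.exp (g x) ∂μ := by
  set m := ∫ x, ρ x * g x ∂μ
  have htangent : ∀ y, Real.exp m * (1 - m + y) ≤ Real.exp y := fun y => by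
    have := Real.add_one_le_exp (y - m)
    rw [show y = m + (y - m) by ring, Real.exp_add]
    nlinarith [Real.exp_pos m]
  calc Real.exp m
      = ∫ x, Real.exp m * ((1 - m) * ρ x + ρ x * g x) ∂μ := by
        rw [integral_const_mul, integral_add (hρi.const_mul _) hρg, integral_const_mul, hmass]
        ring
    _ ≤ ∫ x, ρ x * Real.exp (g x) ∂μ := by
        refine integral_mono_ae ((hρi.const_mul _).add hρg |>.const_mul _) hρe ?_
        filter_upwards [hρ] with x hx
        nlinarith [mul_le_mul_of_nonneg_left (htangent (g x)) hx]

theorem OrthonormalBasis.sum_normSq_dotProduct_star {ι : Type*} [Fintype ι]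
    (b : OrthonormalBasis ι ℂ (EuclideanSpace ℂ ι)) (x : ι → ℂ) :
    ∑ i, Complex.normSq (x ⬝ᵥ star ⇑(b i)) = ∑ k, Complex.normSq (x k) := by
  have h := b.sum_sq_norm_inner_right (WithLp.toLp 2 x)
  simp only [EuclideanSpace.inner_eq_star_dotProduct, EuclideanSpace.norm_sq_eq,
    Complex.sq_norm] at h
  exact h

theorem OrthonormalBasis.star_dotProduct_self {ι : Type*} [Fintype ι]
    (b : OrthonormalBasis ι ℂ (EuclideanSpace ℂ ι)) (i : ι) :
    star ⇑(b i) ⬝ᵥ ⇑(b i) = 1 := by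
  rw [dotProduct_comm, ← EuclideanSpace.inner_eq_star_dotProduct, inner_self_eq_norm_sq_to_K,
    b.orthonormal.1 i, RCLike.ofReal_one, one_pow]

theorem Matrix.IsHermitian.trace_exp_smul {ι : Type*} [Fintype ι] [DecidableEq ι]
    {A : Matrix ι ι ℂ} (hA : A.IsHermitian) (c : ℂ) :
    (NormedSpace.exp (c • A)).trace = ∑ i, Complex.exp (c * hA.eigenvalues i) := by
  set U : Matrix ι ι ℂ := (hA.eigenvectorUnitary : Matrix ι ι ℂ)
  have hUU : star U * U = 1 := mem_unitaryGroup_iff'.mp hA.eigenvectorUnitary.2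
  have hUinv : U⁻¹ = star U := inv_eq_left_inv hUU
  have hUunit : IsUnit U :=
    (isUnit_iff_isUnit_det U).mpr (UnitaryGroup.det_isUnit hA.eigenvectorUnitary)
  have hdiag : c • A = U * diagonal (fun i => c * hA.eigenvalues i) * U⁻¹ := by
    conv_lhs => rw [hA.spectral_theorem, Unitary.conjStarAlgAut_apply]
    rw [hUinv, ← smul_mul_assoc, ← mul_smul_comm, ← diagonal_smul]
    rfl
  rw [hdiag, Matrix.exp_conj U _ hUunit, Matrix.exp_diagonal, trace_mul_comm, ← mul_assoc,
    hUinv, hUU, one_mul, trace_diagonal]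
  simp [Complex.exp_eq_exp_ℂ]

theorem star_dotProduct_mulVec_eq_integral_normSq {X ι : Type*} [MeasurableSpace X] [Fintype ι]
    {μ : Measure X} {M : Matrix ι ι ℂ} {f : X → ℝ} {Ω : X → ι → ℂ}
    (hM : ∀ j k, M j k = ∫ x, (f x : ℂ) * (Ω x j * starRingEnd ℂ (Ω x k)) ∂μ)
    (hint : ∀ j k, Integrable (fun x => (f x : ℂ) * (Ω x j * starRingEnd ℂ (Ω x k))) μ)
    (v : ι → ℂ) :
    star v ⬝ᵥ (M *ᵥ v) = ((∫ x, f x * Complex.normSq (Ω x ⬝ᵥ star v) ∂μ : ℝ) : ℂ) := by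
  have hexpand : ∀ x, ((f x * Complex.normSq (Ω x ⬝ᵥ star v) : ℝ) : ℂ)
      = ∑ j, ∑ k, star (v j) * v k * ((f x : ℂ) * (Ω x j * starRingEnd ℂ (Ω x k))) := by
    intro x
    rw [Complex.ofReal_mul, ← Complex.mul_conj, dotProduct, map_sum, Finset.sum_mul_sum,
      Finset.mul_sum]
    refine Finset.sum_congr rfl fun j _ => ?_
    rw [Finset.mul_sum]
    refine Finset.sum_congr rfl fun k _ => ?_
    simp only [Pi.star_apply, map_mul, Complex.star_def, Complex.conj_conj]
    ring
  rw [← integral_complex_ofReal]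
  simp_rw [hexpand]
  rw [integral_finsetSum _ fun j _ => integrable_finsetSum _ fun k _ => (hint j k).const_mul _]
  simp only [dotProduct, mulVec, Finset.mul_sum]
  refine Finset.sum_congr rfl fun j _ => ?_
  rw [integral_finsetSum _ fun k _ => (hint j k).const_mul _]
  refine Finset.sum_congr rfl fun k _ => ?_
  rw [integral_const_mul, hM, Pi.star_apply]
  ring

section UpperSymbol

variable {X ι : Type*} [TopologicalSpace X] [T2Space X] [MeasurableSpace X]
  [OpensMeasurableSpace X] [Fintype ι] [DecidableEq ι] {μ : Measure X}
  [IsFiniteMeasureOnCompacts μ] {K : Set X} {Ω : X → ι → ℂ} {w s : X → ℝ} {A : Matrix ι ι ℂ}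

theorem exp_mul_re_star_dotProduct_mulVec_le_integral (hK : IsCompact K) (hΩ : Continuous Ω)
    (hw : Continuous w) (hs : Continuous s) (hw0 : ∀ x ∈ K, 0 ≤ w x)
    (hres : ∀ j k, (1 : Matrix ι ι ℂ) j k
      = ∫ x in K, (w x : ℂ) * (Ω x j * starRingEnd ℂ (Ω x k)) ∂μ)
    (hsymb : ∀ j k, A j k = ∫ x in K, ((w x * s x : ℝ) : ℂ) * (Ω x j * starRingEnd ℂ (Ω x k)) ∂μ)
    (t : ℝ) {v : ι → ℂ} (hv : star v ⬝ᵥ v = 1) :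
    Real.exp (t * (star v ⬝ᵥ (A *ᵥ v)).re)
      ≤ ∫ x in K, w x * Complex.normSq (Ω x ⬝ᵥ star v) * Real.exp (t * s x) ∂μ := by
  have hint {f : X → ℝ} (hf : Continuous f) (j k : ι) :
      IntegrableOn (fun x => (f x : ℂ) * (Ω x j * starRingEnd ℂ (Ω x k))) K μ :=
    Continuous.continuousOn (by fun_prop) |>.integrableOn_compact hK
  have hmass := star_dotProduct_mulVec_eq_integral_normSq hres (hint hw) v
  rw [one_mulVec, hv, eq_comm, Complex.ofReal_eq_one] at hmass
  have hmean := star_dotProduct_mulVec_eq_integral_normSq hsymb (hint (hw.mul hs)) v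
  rw [hmean, Complex.ofReal_re, ← integral_const_mul]
  refine le_of_eq_of_le ?_ <| exp_integral_le_integral_mul_exp
    (ae_restrict_of_forall_mem hK.measurableSet fun x hx =>
      mul_nonneg (hw0 x hx) (Complex.normSq_nonneg _))
    (Continuous.continuousOn (by fun_prop) |>.integrableOn_compact hK)
    (Continuous.continuousOn (by fun_prop) |>.integrableOn_compact hK)
    (Continuous.continuousOn (by fun_prop) |>.integrableOn_compact hK) hmass
  congr 2 with x
  ring

theorem Matrix.IsHermitian.sum_exp_mul_eigenvalues_le_integral (hA : A.IsHermitian)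
    (hK : IsCompact K) (hΩ : Continuous Ω) (hw : Continuous w) (hs : Continuous s)
    (hw0 : ∀ x ∈ K, 0 ≤ w x) (hnorm : ∀ x, ∑ k, Complex.normSq (Ω x k) = 1)
    (hres : ∀ j k, (1 : Matrix ι ι ℂ) j k
      = ∫ x in K, (w x : ℂ) * (Ω x j * starRingEnd ℂ (Ω x k)) ∂μ)
    (hsymb : ∀ j k, A j k = ∫ x in K, ((w x * s x : ℝ) : ℂ) * (Ω x j * starRingEnd ℂ (Ω x k)) ∂μ)
    (t : ℝ) :
    ∑ i, Real.exp (t * hA.eigenvalues i) ≤ ∫ x in K, w x * Real.exp (t * s x) ∂μ := by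
  set ψ := hA.eigenvectorBasis
  calc ∑ i, Real.exp (t * hA.eigenvalues i)
      ≤ ∑ i, ∫ x in K, w x * Complex.normSq (Ω x ⬝ᵥ star ⇑(ψ i)) * Real.exp (t * s x) ∂μ :=
        Finset.sum_le_sum fun i _ => by
          rw [hA.eigenvalues_eq, RCLike.re_to_complex]
          exact exp_mul_re_star_dotProduct_mulVec_le_integral hK hΩ hw hs hw0 hres hsymb t
            (ψ.star_dotProduct_self i)
    _ = ∫ x in K, w x * Real.exp (t * s x) ∂μ := by
        rw [← integral_finsetSum _ fun i _ => Continuous.continuousOn (by fun_prop)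
          |>.integrableOn_compact hK]
        simp_rw [← Finset.sum_mul, ← Finset.mul_sum, ψ.sum_normSq_dotProduct_star, hnorm, mul_one]

end UpperSymbol

theorem integral_pow_mul_one_sub_pow (a b : ℕ) :
    ∫ t in (0 : ℝ)..1, t ^ a * (1 - t) ^ b
      = (a.factorial * b.factorial : ℝ) / (a + b + 1).factorial := by
  have hbeta := Complex.betaIntegral_eq_Gamma_mul_div (a + 1) (b + 1)
    (by simp only [Complex.add_re, Complex.natCast_re, Complex.one_re]; positivity)
    (by simp only [Complex.add_re, Complex.natCast_re, Complex.one_re]; positivity)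
  rw [show (a + 1 + (b + 1) : ℂ) = ((a + b + 1 : ℕ) : ℂ) + 1 by push_cast; ring,
    Complex.Gamma_nat_eq_factorial, Complex.Gamma_nat_eq_factorial,
    Complex.Gamma_nat_eq_factorial, Complex.betaIntegral] at hbeta
  apply Complex.ofReal_injective
  rw [← intervalIntegral.integral_ofReal]
  push_cast
  rw [← hbeta]
  refine intervalIntegral.integral_congr fun t _ => ?_
  simp [Complex.cpow_natCast]

theorem integral_sin_mul_cos_half_pow_mul_sin_half_pow (a b : ℕ) :
    ∫ θ in (0 : ℝ)..Real.pi,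
        Real.sin θ * Real.cos (θ / 2) ^ (2 * a) * Real.sin (θ / 2) ^ (2 * b)
      = 2 * (a.factorial * b.factorial : ℝ) / (a + b + 1).factorial := by
  -- substitute `t = sin² (θ / 2)`, so that `dt = sin θ dθ / 2` and `cos² (θ / 2) = 1 - t`
  have hderiv : ∀ θ ∈ uIcc (0 : ℝ) Real.pi,
      HasDerivAt (fun θ => Real.sin (θ / 2) ^ 2) (Real.sin θ / 2) θ := fun θ _ => by
    refine (((hasDerivAt_id' θ).div_const 2).sin.fun_pow 2).congr_deriv ?_
    rw [show Real.sin θ = Real.sin (2 * (θ / 2)) by ring_nf, Real.sin_two_mul]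
    ring
  have hsub := intervalIntegral.integral_comp_mul_deriv hderiv
    (by fun_prop : Continuous fun θ => Real.sin θ / 2).continuousOn
    (by fun_prop : Continuous fun t : ℝ => t ^ b * (1 - t) ^ a)
  simp only [Function.comp_apply, Real.sin_pi_div_two, zero_div, Real.sin_zero] at hsub
  norm_num at hsub
  rw [integral_pow_mul_one_sub_pow, add_comm b a] at hsub
  rw [mul_div_assoc, mul_comm (a.factorial : ℝ), ← hsub, ← intervalIntegral.integral_const_mul]
  refine intervalIntegral.integral_congr fun θ _ => ?_
  simp only [pow_mul, ← Real.cos_sq']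
  ring

theorem integral_exp_I_mul_intCast_mul (m : ℤ) :
    ∫ φ in (0 : ℝ)..(2 * Real.pi), Complex.exp (Complex.I * m * φ)
      = if m = 0 then ((2 * Real.pi : ℝ) : ℂ) else 0 := by
  split_ifs with hm
  · simp [hm]
  · have hc : Complex.I * m ≠ 0 := by simp [Complex.I_ne_zero, hm]
    rw [integral_exp_mul_complex hc,
      show Complex.I * m * ((2 * Real.pi : ℝ) : ℂ) = m * (2 * Real.pi * Complex.I) by
        push_cast; ring,
      Complex.exp_int_mul_two_pi_mul_I]
    simp

/-- Polar and azimuthal angles `(θ, φ)` of the unit sphere. -/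
def sphereAngles : Set (ℝ × ℝ) := Icc 0 Real.pi ×ˢ Icc 0 (2 * Real.pi)

theorem isCompact_sphereAngles : IsCompact sphereAngles :=
  isCompact_Icc.prod isCompact_Icc

theorem intervalIntegral_intervalIntegral_eq_setIntegral_sphereAngles {E : Type*}
    [NormedAddCommGroup E] [NormedSpace ℝ E] {f : ℝ → ℝ → E}
    (hf : Continuous fun p : ℝ × ℝ => f p.1 p.2) :
    ∫ θ in (0 : ℝ)..Real.pi, ∫ φ in (0 : ℝ)..(2 * Real.pi), f θ φ
      = ∫ p in sphereAngles, f p.1 p.2 :=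
  intervalIntegral_intervalIntegral_eq_setIntegral_prod Real.pi_pos.le (by positivity) hf

section CoherentState

variable (n : ℕ)

@[fun_prop]
theorem continuous_coherentState : Continuous fun p : ℝ × ℝ => coherentState n p.1 p.2 := by
  unfold coherentState
  fun_prop

theorem coherentState_mul_conj (θ φ : ℝ) (j k : Fin (n + 1)) :
    coherentState n θ φ j * starRingEnd ℂ (coherentState n θ φ k)
      = ((Real.sqrt (n.choose j) * Real.sqrt (n.choose k) * Real.cos (θ / 2) ^ ((j : ℕ) + k)
          * Real.sin (θ / 2) ^ ((n - j : ℕ) + (n - k : ℕ)) : ℝ) : ℂ)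
        * Complex.exp (Complex.I * (((k : ℤ) - j : ℤ) : ℂ) * φ) := by
  have hj : (j : ℕ) ≤ n := Nat.lt_succ_iff.mp j.isLt
  have hk : (k : ℕ) ≤ n := Nat.lt_succ_iff.mp k.isLt
  have hphase : Complex.exp (Complex.I * ((n - j : ℕ) : ℂ) * φ)
        * Complex.exp (-(Complex.I * ((n - k : ℕ) : ℂ) * φ))
      = Complex.exp (Complex.I * (((k : ℤ) - j : ℤ) : ℂ) * φ) := by
    rw [← Complex.exp_add]
    push_cast [hj, hk]
    ring_nf
  unfold coherentState
  simp only [map_mul, map_pow, Complex.conj_ofReal, ← Complex.exp_conj, Complex.conj_I,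
    Complex.conj_natCast]
  rw [← hphase]
  push_cast
  simp only [neg_mul]
  ring

theorem normSq_coherentState (θ φ : ℝ) (k : Fin (n + 1)) :
    Complex.normSq (coherentState n θ φ k)
      = n.choose k * Real.cos (θ / 2) ^ (2 * (k : ℕ)) * Real.sin (θ / 2) ^ (2 * (n - k : ℕ)) := by
  have h := coherentState_mul_conj n θ φ k k
  rw [Complex.mul_conj, sub_self, Int.cast_zero, mul_zero, zero_mul, Complex.exp_zero, mul_one,
    Complex.ofReal_inj, Real.mul_self_sqrt (Nat.cast_nonneg _), ← two_mul, ← two_mul] at h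
  exact h

theorem sum_normSq_coherentState (θ φ : ℝ) :
    ∑ k, Complex.normSq (coherentState n θ φ k) = 1 := by
  have h := add_pow (Real.cos (θ / 2) ^ 2) (Real.sin (θ / 2) ^ 2) n
  rw [Real.cos_sq_add_sin_sq, one_pow, ← Fin.sum_univ_eq_sum_range] at h
  rw [h]
  exact Finset.sum_congr rfl fun k _ => by rw [normSq_coherentState, pow_mul, pow_mul]; ring

theorem integral_sin_mul_coherentState_mul_conj (j k : Fin (n + 1)) :
    ∫ θ in (0 : ℝ)..Real.pi, ∫ φ in (0 : ℝ)..(2 * Real.pi),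
        (Real.sin θ : ℂ) * (coherentState n θ φ j * starRingEnd ℂ (coherentState n θ φ k))
      = if j = k then ((4 * Real.pi / (n + 1) : ℝ) : ℂ) else 0 := by
  simp_rw [coherentState_mul_conj, ← mul_assoc, intervalIntegral.integral_const_mul,
    integral_exp_I_mul_intCast_mul, sub_eq_zero, Int.natCast_inj, Fin.val_inj, eq_comm (a := k)]
  split_ifs with hjk
  · subst hjk
    have hj : (j : ℕ) ≤ n := Nat.lt_succ_iff.mp j.isLt
    simp_rw [Real.mul_self_sqrt (Nat.cast_nonneg _), ← two_mul, ← Complex.ofReal_mul]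
    rw [intervalIntegral.integral_ofReal, Complex.ofReal_inj]
    calc ∫ θ in (0 : ℝ)..Real.pi, Real.sin θ * (n.choose j * Real.cos (θ / 2) ^ (2 * (j : ℕ))
            * Real.sin (θ / 2) ^ (2 * (n - j))) * (2 * Real.pi)
        = 2 * Real.pi * n.choose j * ∫ θ in (0 : ℝ)..Real.pi,
            Real.sin θ * Real.cos (θ / 2) ^ (2 * (j : ℕ)) * Real.sin (θ / 2) ^ (2 * (n - j)) := by
          rw [← intervalIntegral.integral_const_mul]
          exact intervalIntegral.integral_congr fun θ _ => by ring
      _ = 4 * Real.pi / (n + 1) := by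
          rw [integral_sin_mul_cos_half_pow_mul_sin_half_pow, Nat.add_sub_cancel' hj,
            Nat.factorial_succ, ← Nat.choose_mul_factorial_mul_factorial hj]
          have hc : (n.choose j : ℝ) ≠ 0 := Nat.cast_ne_zero.mpr (Nat.choose_pos hj).ne'
          push_cast
          field_simp
          ring
  · simp

theorem coherentState_resolution_identity (j k : Fin (n + 1)) :
    (1 : Matrix (Fin (n + 1)) (Fin (n + 1)) ℂ) j k
      = ∫ p in sphereAngles,
          ((((n : ℝ) + 1) / (4 * Real.pi) * Real.sin p.1 : ℝ) : ℂ)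
            * (coherentState n p.1 p.2 j * starRingEnd ℂ (coherentState n p.1 p.2 k)) := by
  have h := integral_sin_mul_coherentState_mul_conj n j k
  rw [intervalIntegral_intervalIntegral_eq_setIntegral_sphereAngles (by fun_prop)] at h
  simp_rw [Complex.ofReal_mul, mul_assoc, integral_const_mul, h, one_apply]
  split_ifs
  · push_cast
    field_simp
  · simp

end CoherentState

open Matrix in
theorem upper_berezin_lieb_general (n : ℕ) (H : Matrix (Fin (n + 1)) (Fin (n + 1)) ℂ)
    (hH : H.IsHermitian) (u : ℝ → ℝ → ℝ)
    (hu : Continuous fun p : ℝ × ℝ => u p.1 p.2)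
    (hupper : ∀ j k, H j k
      = (((n : ℂ) + 1) / (4 * (Real.pi : ℂ)))
        * ∫ θ in (0 : ℝ)..Real.pi, ∫ φ in (0 : ℝ)..(2 * Real.pi),
            ((Real.sin θ : ℝ) : ℂ) * ((u θ φ : ℝ) : ℂ)
              * (coherentState n θ φ j * (starRingEnd ℂ) (coherentState n θ φ k)))
    (β : ℝ) :
    (NormedSpace.exp ((-β : ℂ) • H)).trace.re / ((n : ℝ) + 1)
      ≤ (1 / (4 * Real.pi))
        * ∫ θ in (0 : ℝ)..Real.pi, ∫ φ in (0 : ℝ)..(2 * Real.pi),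
            Real.sin θ * Real.exp (-β * u θ φ) := by
  set c : ℝ := ((n : ℝ) + 1) / (4 * Real.pi)
  have hsymb : ∀ j k, H j k = ∫ p in sphereAngles, ((c * Real.sin p.1 * u p.1 p.2 : ℝ) : ℂ)
      * (coherentState n p.1 p.2 j * starRingEnd ℂ (coherentState n p.1 p.2 k)) := fun j k => by
    rw [hupper, intervalIntegral_intervalIntegral_eq_setIntegral_sphereAngles (by fun_prop),
      ← integral_const_mul]
    congr 1 with p
    simp only [c]
    push_cast
    ring
  have hBL := hH.sum_exp_mul_eigenvalues_le_integral isCompact_sphereAngles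
    (continuous_coherentState n) (by fun_prop) hu
    (fun p hp => mul_nonneg (by positivity) (Real.sin_nonneg_of_nonneg_of_le_pi hp.1.1 hp.1.2))
    (fun p => sum_normSq_coherentState n p.1 p.2) (coherentState_resolution_identity n) hsymb (-β)
  simp only [hH.trace_exp_smul, Complex.re_sum, ← Complex.ofReal_neg, ← Complex.ofReal_mul,
    Complex.exp_ofReal_re]
  rw [intervalIntegral_intervalIntegral_eq_setIntegral_sphereAngles (by fun_prop),
    div_le_iff₀ (by positivity)]
  refine hBL.trans_eq ?_
  simp_rw [mul_assoc, integral_const_mul]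
  ring

open Matrix in
/-- Upper Berezin–Lieb inequality: if `H` is a self-adjoint operator on `ℂ^{2S+1}`
(with `2S = n`) with (continuous, real-valued) upper symbol `u`, i.e.
`H = (2S+1)/(4π) ∫_{S²} u(Ω) |Ω⟩⟨Ω| dΩ`, then for all `β ≥ 0`,
`Tr(e^{-βH})/(2S+1) ≤ (1/(4π)) ∫_{S²} e^{-β u(Ω)} dΩ`, the sphere being parametrized
by spherical angles `(θ,φ)` with surface measure `sinθ dθ dφ`. -/
theorem upper_berezin_lieb (n : ℕ) (H : Matrix (Fin (n + 1)) (Fin (n + 1)) ℂ)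
    (hH : H.IsHermitian) (u : ℝ → ℝ → ℝ)
    (hu : Continuous fun p : ℝ × ℝ => u p.1 p.2)
    (hupper : ∀ j k, H j k
      = (((n : ℂ) + 1) / (4 * (Real.pi : ℂ)))
        * ∫ θ in (0 : ℝ)..Real.pi, ∫ φ in (0 : ℝ)..(2 * Real.pi),
            ((Real.sin θ : ℝ) : ℂ) * ((u θ φ : ℝ) : ℂ)
              * (coherentState n θ φ j * (starRingEnd ℂ) (coherentState n θ φ k)))
    (β : ℝ) (hβ : 0 ≤ β) :
    (NormedSpace.exp ((-β : ℂ) • H)).trace.re / ((n : ℝ) + 1)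
      ≤ (1 / (4 * Real.pi))
        * ∫ θ in (0 : ℝ)..Real.pi, ∫ φ in (0 : ℝ)..(2 * Real.pi),
            Real.sin θ * Real.exp (-β * u θ φ) :=
  upper_berezin_lieb_general n H hH u hu hupper β
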